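/- Two Gauss codes w and w' on n letters are orientedly equivalent if and only if proj^LP(w') = (shift^LP)^k(proj^LP(w)) for some integer k ≥ 0. -/

import Mathlib

/-- A Gauss code on `n` letters: a bijection from the `2*n` positions to
letters paired with a side (`false` = L, `true` = R). -/
abbrev GaussCode (n : ℕ) := Fin (2 * n) ≃ Fin n × Bool

instance (n : ℕ) [NeZero n] : NeZero (2 * n) := ⟨by have := NeZero.ne n; omega⟩

namespace GaussCode

variable {n : ℕ}

/-- `π_*(w)`: relabel the letters by the permutation `π`. -/
def permAct (π : Equiv.Perm (Fin n)) (w : GaussCode n) : GaussCode n :=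
  w.trans (π.prodCongr (Equiv.refl Bool))

/-- `shift[m](w)`: the code whose entry at position `i` is the entry of `w` at
position `i + m` (mod `2n`). -/
def shift [NeZero n] (m : ℕ) (w : GaussCode n) : GaussCode n :=
  (Equiv.addRight (Fin.ofNat (2 * n) m)).trans w

/-- `rev(w)`: the code whose entry at position `i` is the entry of `w` at
position `2n - 1 - i`. -/
def rev (w : GaussCode n) : GaussCode n :=
  (Fin.revPerm).trans w

/-- A Gauss code is left preferred if its `L`-entries appear in the order
`(1,L), (2,L), …, (n,L)` and its entry at position `0` is `(1,L)`. -/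
def IsLeftPreferred [NeZero n] (w : GaussCode n) : Prop :=
  StrictMono (fun j : Fin n => w.symm (j, false)) ∧ w 0 = (0, false)

/-- `proj^LP(w)`: relabel letters in the order of appearance of their `L`-entries,
then rotate so that `(1,L)` is at position `0`. -/
def projLP [NeZero n] (w : GaussCode n) : GaussCode n :=
  let π : Equiv.Perm (Fin n) := (Tuple.sort (fun j : Fin n => w.symm (j, false)))⁻¹
  let w' := permAct π w
  shift ((w'.symm ((0 : Fin n), false)).val) w'

/-- `shift^LP(w) := proj^LP(shift[1](w))`. -/
def shiftLP [NeZero n] (w : GaussCode n) : GaussCode n :=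
  projLP (shift 1 w)

/-- `rev^LP(w) := proj^LP(rev(w))`. -/
def revLP [NeZero n] (w : GaussCode n) : GaussCode n :=
  projLP (rev w)

/-- The value of an entry in the order `(1,L) < (1,R) < (2,L) < (2,R) < …`. -/
def entryKey (e : Fin n × Bool) : ℕ :=
  2 * e.1.val + (if e.2 then 1 else 0)

/-- Lexicographic (strict) order on Gauss codes, comparing entries position by
position in the order `(1,L) < (1,R) < (2,L) < (2,R) < …`. -/
def lexLt (w w' : GaussCode n) : Prop :=
  ∃ i : Fin (2 * n), (∀ k, k < i → w k = w' k) ∧ entryKey (w i) < entryKey (w' i)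

/-- Lexicographic order on Gauss codes. -/
def lexLe (w w' : GaussCode n) : Prop :=
  w = w' ∨ lexLt w w'

/-- A left preferred Gauss code is left canonical if it is the smallest element
of its `shift^LP`-orbit `{w, shift^LP(w), …, (shift^LP)^{n-1}(w)}`. -/
def IsLeftCanonical [NeZero n] (w : GaussCode n) : Prop :=
  IsLeftPreferred w ∧ ∀ k < n, lexLe w (shiftLP^[k] w)

/-- `proj^LC(w)`: the smallest element of the `shift^LP`-orbit of `proj^LP(w)`. -/
noncomputable def projLC [NeZero n] (w : GaussCode n) : GaussCode n :=
  letI := Classical.propDecidable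
  if h : ∃ v : GaussCode n, (∃ k < n, v = shiftLP^[k] (projLP w)) ∧
      ∀ k < n, lexLe v (shiftLP^[k] (projLP w))
  then h.choose else projLP w

/-- `rev^LC(w) := proj^LC(rev(w))`. -/
noncomputable def revLC [NeZero n] (w : GaussCode n) : GaussCode n :=
  projLC (rev w)

/-- Oriented equivalence of Gauss codes: `w' = shift[m](π_*(w))` for some
permutation `π` and integer `m`. -/
def OrientedEquiv [NeZero n] (w w' : GaussCode n) : Prop :=
  ∃ (π : Equiv.Perm (Fin n)) (m : ℕ), w' = shift m (permAct π w)

/-- Unoriented equivalence: `w` is orientedly equivalent to `w'` or to `rev(w')`. -/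
def UnorientedEquiv [NeZero n] (w w' : GaussCode n) : Prop :=
  OrientedEquiv w w' ∨ OrientedEquiv w (rev w')

/-- A Gauss code is 1-reducible if two cyclically adjacent entries share the same letter. -/
def OneReducible [NeZero n] (w : GaussCode n) : Prop :=
  ∃ i : Fin (2 * n), (w i).1 = (w (i + 1)).1

/-- A Gauss code is 2-reducible (cyclically, with `L = false`, `R = true`). -/
def TwoReducible [NeZero n] (w : GaussCode n) : Prop :=
  ∃ (i i' : Fin (2 * n)) (j k : Fin n), j ≠ k ∧
    ((w i = (j, false) ∧ w (i + 1) = (k, true) ∧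
        w i' = (j, true) ∧ w (i' + 1) = (k, false)) ∨
     (w i = (j, false) ∧ w (i + 1) = (k, true) ∧
        w i' = (k, false) ∧ w (i' + 1) = (j, true)) ∨
     (w i = (j, true) ∧ w (i + 1) = (k, false) ∧
        w i' = (k, true) ∧ w (i' + 1) = (j, false)))

/-- A Gauss code is minimal if it is neither 1-reducible nor 2-reducible. -/
def IsMinimal [NeZero n] (w : GaussCode n) : Prop :=
  ¬ OneReducible w ∧ ¬ TwoReducible w

/-- `σ_w`: the involution of positions sending each position to the unique other
position carrying the same letter. -/
def sigmaMap (w : GaussCode n) : Fin (2 * n) → Fin (2 * n) :=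
  fun i => w.symm ((w i).1, !(w i).2)

/-- `h_w`: the side (`false` = L, `true` = R) of the entry at each position. -/
def hMap (w : GaussCode n) : Fin (2 * n) → Bool :=
  fun i => (w i).2

end GaussCode

/-!
Relabelling the letters does not change `proj^LP`, so it suffices to compare `proj^LP(shift[m] w)`
with `proj^LP(w)`. Rotating past an `R`-entry does not change `proj^LP`, while rotating past an
`L`-entry at position `0` is one application of `shift^LP`; hence `proj^LP(shift[m] w)` is
`(shift^LP)^k(proj^LP w)`, where `k` counts the `L`-entries among the first `m` positions.
Conversely, `proj^LP` and `shift^LP` stay inside the oriented equivalence class.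
-/

namespace Tuple

variable {n : ℕ} {α β : Type*} [LinearOrder α] [LinearOrder β]

theorem eq_sort_of_injective_of_monotone {g : Fin n → α} (hg : Function.Injective g)
    {σ : Equiv.Perm (Fin n)} (h : Monotone (g ∘ σ)) : σ = sort g :=
  Equiv.ext fun i => hg (congrFun (unique_monotone h (monotone_sort g)) i)

theorem sort_comp_perm {g : Fin n → α} (hg : Function.Injective g) (π : Equiv.Perm (Fin n)) :
    sort (g ∘ π) = π⁻¹ * sort g := by
  refine (eq_sort_of_injective_of_monotone (hg.comp π.injective) ?_).symm
  convert monotone_sort g using 1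
  ext i
  simp

theorem sort_comp_of_strictMonoOn {g : Fin n → α} (hg : Function.Injective g) {f : α → β}
    (hf : StrictMonoOn f (Set.range g)) : sort (f ∘ g) = sort g := by
  refine (eq_sort_of_injective_of_monotone ?_ ?_).symm
  · exact fun i j h => hg (hf.injOn (Set.mem_range_self i) (Set.mem_range_self j) h)
  · exact fun i j hij =>
      hf.monotoneOn (Set.mem_range_self _) (Set.mem_range_self _) (monotone_sort g hij)

end Tuple

theorem Fin.strictMonoOn_sub_one {N : ℕ} [NeZero N] :
    StrictMonoOn (fun i : Fin N => i - 1) {0}ᶜ := fun a ha b hb hab => by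
  rw [Set.mem_compl_singleton_iff] at ha hb
  rw [Fin.lt_def, Fin.val_sub_one_of_ne_zero ha, Fin.val_sub_one_of_ne_zero hb]
  have := Fin.pos_iff_ne_zero.mpr ha
  rw [Fin.lt_def] at hab this
  omega

namespace GaussCode

open Fin.NatCast

variable {n : ℕ}

@[simp]
theorem permAct_one (w : GaussCode n) : permAct 1 w = w := rfl

theorem permAct_permAct (π π' : Equiv.Perm (Fin n)) (w : GaussCode n) :
    permAct π' (permAct π w) = permAct (π' * π) w := rfl

def leftPos (w : GaussCode n) (j : Fin n) : Fin (2 * n) :=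
  w.symm (j, false)

theorem leftPos_injective (w : GaussCode n) : Function.Injective (leftPos w) := fun _ _ h => by
  simpa [leftPos] using congrArg (fun i => (w i).1) h

theorem leftPos_permAct (π : Equiv.Perm (Fin n)) (w : GaussCode n) :
    leftPos (permAct π w) = leftPos w ∘ ⇑π⁻¹ := rfl

def relabelLeft (w : GaussCode n) : GaussCode n :=
  permAct (Tuple.sort (leftPos w))⁻¹ w

theorem relabelLeft_permAct (π : Equiv.Perm (Fin n)) (w : GaussCode n) :
    relabelLeft (permAct π w) = relabelLeft w := by
  rw [relabelLeft, relabelLeft, leftPos_permAct, Tuple.sort_comp_perm (leftPos_injective w),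
    permAct_permAct, mul_inv_rev, inv_inv, inv_mul_cancel_right]

theorem strictMono_leftPos_relabelLeft (w : GaussCode n) :
    StrictMono (leftPos (relabelLeft w)) := by
  rw [relabelLeft, leftPos_permAct, inv_inv]
  exact (Tuple.monotone_sort _).strictMono_of_injective
    ((leftPos_injective w).comp (Equiv.injective _))

section Shift

variable [NeZero n]

@[simp]
theorem shift_apply (m : ℕ) (w : GaussCode n) (i : Fin (2 * n)) : shift m w i = w (i + m) := rfl

theorem shift_symm_apply (m : ℕ) (w : GaussCode n) (e : Fin n × Bool) :
    (shift m w).symm e = w.symm e - m := by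
  simp [shift, Equiv.addRight_symm, sub_eq_add_neg]

theorem shift_shift (a b : ℕ) (w : GaussCode n) : shift a (shift b w) = shift (a + b) w :=
  Equiv.ext fun i => by simp [add_assoc]

@[simp]
theorem shift_zero (w : GaussCode n) : shift 0 w = w :=
  Equiv.ext fun i => by simp

theorem shift_congr {a b : ℕ} (h : (a : Fin (2 * n)) = b) (w : GaussCode n) :
    shift a w = shift b w :=
  Equiv.ext fun i => by simp [h]

theorem shift_permAct (m : ℕ) (π : Equiv.Perm (Fin n)) (w : GaussCode n) :
    shift m (permAct π w) = permAct π (shift m w) := rfl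

theorem leftPos_shift (m : ℕ) (w : GaussCode n) :
    leftPos (shift m w) = fun j => leftPos w j - m :=
  funext fun j => shift_symm_apply m w (j, false)

theorem relabelLeft_shift_one_of_right {w : GaussCode n} (h : (w 0).2 = true) :
    relabelLeft (shift 1 w) = shift 1 (relabelLeft w) := by
  have hpos : Set.range (leftPos w) ⊆ {0}ᶜ := by
    rintro _ ⟨j, rfl⟩ (hj : leftPos w j = 0)
    rw [← hj, leftPos, Equiv.apply_symm_apply] at h
    exact Bool.false_ne_true h
  have hsort : Tuple.sort (leftPos (shift 1 w)) = Tuple.sort (leftPos w) := by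
    rw [leftPos_shift, Nat.cast_one]
    exact Tuple.sort_comp_of_strictMonoOn (f := fun i : Fin (2 * n) => i - 1)
      (leftPos_injective w) (Fin.strictMonoOn_sub_one.mono hpos)
  rw [relabelLeft, relabelLeft, hsort, shift_permAct]

def shiftTo (e : Fin n × Bool) (v : GaussCode n) : GaussCode n :=
  shift (v.symm e).val v

theorem shiftTo_shift (e : Fin n × Bool) (m : ℕ) (v : GaussCode n) :
    shiftTo e (shift m v) = shiftTo e v := by
  rw [shiftTo, shiftTo, shift_shift, shift_symm_apply]
  exact shift_congr (by simp) v

theorem shiftTo_of_symm_eq_zero {e : Fin n × Bool} {v : GaussCode n} (h : v.symm e = 0) :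
    shiftTo e v = v := by
  simp [shiftTo, h]

theorem projLP_eq_shiftTo_relabelLeft (w : GaussCode n) :
    projLP w = shiftTo (0, false) (relabelLeft w) := rfl

theorem projLP_permAct (π : Equiv.Perm (Fin n)) (w : GaussCode n) :
    projLP (permAct π w) = projLP w := by
  rw [projLP_eq_shiftTo_relabelLeft, projLP_eq_shiftTo_relabelLeft, relabelLeft_permAct]

theorem projLP_shift_one_of_right {w : GaussCode n} (h : (w 0).2 = true) :
    projLP (shift 1 w) = projLP w := by
  rw [projLP_eq_shiftTo_relabelLeft, projLP_eq_shiftTo_relabelLeft,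
    relabelLeft_shift_one_of_right h, shiftTo_shift]

theorem leftPos_zero_of_strictMono {v : GaussCode n} (hv : StrictMono (leftPos v))
    (h : (v 0).2 = false) : leftPos v 0 = 0 := by
  have h0 : leftPos v (v 0).1 = 0 := by
    rw [leftPos, ← h, Equiv.symm_apply_apply]
  exact le_antisymm ((hv.monotone (Fin.zero_le _)).trans_eq h0) (Fin.zero_le _)

theorem projLP_of_left {w : GaussCode n} (h : (w 0).2 = false) : projLP w = relabelLeft w :=
  shiftTo_of_symm_eq_zero (leftPos_zero_of_strictMono (strictMono_leftPos_relabelLeft w) h)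

theorem shiftLP_projLP_of_left {w : GaussCode n} (h : (w 0).2 = false) :
    shiftLP (projLP w) = projLP (shift 1 w) := by
  rw [shiftLP, projLP_of_left h, relabelLeft, shift_permAct, projLP_permAct]

theorem exists_projLP_shift_eq_iterate (w : GaussCode n) (m : ℕ) :
    ∃ k, projLP (shift m w) = shiftLP^[k] (projLP w) := by
  induction m with
  | zero => exact ⟨0, by rw [shift_zero, Function.iterate_zero_apply]⟩
  | succ m ih =>
    obtain ⟨k, hk⟩ := ih
    rw [Nat.add_comm, ← shift_shift]
    rcases Bool.eq_false_or_eq_true ((shift m w) 0).2 with h | h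
    · exact ⟨k, by rw [projLP_shift_one_of_right h, hk]⟩
    · exact ⟨k + 1, by rw [← shiftLP_projLP_of_left h, hk, Function.iterate_succ_apply']⟩

end Shift

namespace OrientedEquiv

variable [NeZero n] {u v w : GaussCode n}

theorem refl (w : GaussCode n) : OrientedEquiv w w :=
  ⟨1, 0, by rw [permAct_one, shift_zero]⟩

theorem trans (h : OrientedEquiv u v) (h' : OrientedEquiv v w) : OrientedEquiv u w := by
  obtain ⟨π, m, rfl⟩ := h
  obtain ⟨π', m', rfl⟩ := h'
  exact ⟨π' * π, m' + m, by
    rw [shift_permAct, shift_shift, shift_permAct, permAct_permAct, ← shift_permAct]⟩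

theorem symm (h : OrientedEquiv v w) : OrientedEquiv w v := by
  obtain ⟨π, m, rfl⟩ := h
  refine ⟨π⁻¹, (-(m : Fin (2 * n))).val, ?_⟩
  rw [shift_permAct, shift_shift, shift_permAct, permAct_permAct, inv_mul_cancel, permAct_one,
    shift_congr (b := 0) (by simp), shift_zero]

end OrientedEquiv

theorem orientedEquiv_projLP [NeZero n] (w : GaussCode n) : OrientedEquiv w (projLP w) :=
  ⟨_, _, rfl⟩

theorem orientedEquiv_shiftLP [NeZero n] (w : GaussCode n) : OrientedEquiv w (shiftLP w) :=
  OrientedEquiv.trans ⟨1, 1, (permAct_one _).symm⟩ (orientedEquiv_projLP _)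

theorem orientedEquiv_iterate_shiftLP [NeZero n] (w : GaussCode n) (k : ℕ) :
    OrientedEquiv w (shiftLP^[k] w) := by
  induction k with
  | zero => exact .refl w
  | succ k ih =>
    rw [Function.iterate_succ_apply']
    exact ih.trans (orientedEquiv_shiftLP _)

end GaussCode

open GaussCode in
/-- two Gauss codes are orientedly equivalent iff their left preferred
projections lie in the same `shift^LP`-orbit. -/
theorem stmt6 (n : ℕ) [NeZero n] (w w' : GaussCode n) :
    OrientedEquiv w w' ↔ ∃ k : ℕ, projLP w' = shiftLP^[k] (projLP w) := by
  constructor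
  · rintro ⟨π, m, rfl⟩
    rw [shift_permAct, projLP_permAct]
    exact exists_projLP_shift_eq_iterate w m
  · rintro ⟨k, hk⟩
    have h : OrientedEquiv (projLP w) (projLP w') := hk ▸ orientedEquiv_iterate_shiftLP _ k
    exact ((orientedEquiv_projLP w).trans h).trans (orientedEquiv_projLP w').symm
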